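/- In the setting of a singular primary K-extension: let p be an odd prime, S/K cyclic of degree p generated by θ: ω ↦ ωζ, with primes π_n = θ^n(π₀) above π satisfying π₀² | ω - 1 and π_n ∥ ω - 1 for n ≥ 1. Let σ_μ extend σ: ζ ↦ ζ^v with σ_μ(ω) ≡ ω^μ (mod π²). Then for each k with 1 ≤ k ≤ p-1, σ_μ(π_k) = π_{n_k} where n_k ≡ k·v·μ^{-1} (mod p). -/

import Mathlib

open NumberField

/-! The prime `σ(π_k)` contains `σ(ζ) - 1`, an associate of `ζ - 1`, so it is one of the
factors `π_N` of `(ζ - 1)`. Applying `θ^k` to `π₀² ∣ ω - 1` gives `π_k² ∣ ωζ^k - 1`; applying `σ`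
and `σ(ω) ≡ ω^μ` then gives `π_N² ∣ ω^μ ζ^{kv} - 1`, while the `μ`-th power of `π_N² ∣ ωζ^N - 1`
gives `π_N² ∣ ω^μ ζ^{Nμ} - 1`. As `ω` is a unit modulo `π_N`, `π_N² ∣ ζ^{kv} - ζ^{Nμ}`.
Now `π_N²` does not divide `ζ - 1` (for `N ≥ 1` since it does not divide `ω - 1`, for `N = 0`
since `π₀` differs from the other factors), and `ζ - 1` is an associate of every `ζ^a - 1` with
`p ∤ a`; hence `kv ≡ Nμ (mod p)`. -/

namespace Ideal

variable {R : Type*} [CommRing R] {ι : Type*}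

theorem prod_le_of_mem {s : Finset ι} {P : ι → Ideal R} {i : ι} (hi : i ∈ s) :
    ∏ j ∈ s, P j ≤ P i :=
  prod_le_inf.trans (Finset.inf_le hi)

theorem exists_eq_of_prod_le {s : Finset ι} {P : ι → Ideal R} (hP : ∀ i ∈ s, (P i).IsMaximal)
    {Q : Ideal R} [hQ : Q.IsPrime] (h : ∏ i ∈ s, P i ≤ Q) : ∃ i ∈ s, P i = Q := by
  obtain ⟨i, hi, hle⟩ := hQ.prod_le.1 h
  exact ⟨i, hi, (hP i hi).eq_of_le hQ.ne_top hle⟩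

theorem apply_mem_map_pow {S : Type*} [CommRing S] (f : R →+* S) {I : Ideal R} {e : ℕ} {x : R}
    (hx : x ∈ I ^ e) : f x ∈ I.map f ^ e := by
  rw [← Ideal.map_pow]
  exact mem_map_of_mem f hx

theorem sub_one_notMem_of_mul_pow_sub_one_mem {I : Ideal R} {ω ζ : R} {n : ℕ}
    (h : ω * ζ ^ n - 1 ∈ I) (hω : ω - 1 ∉ I) : ζ - 1 ∉ I := by
  intro hζ
  have hζn : ζ ^ n - 1 ∈ I := mem_of_dvd _ (by simpa using sub_dvd_pow_sub_pow ζ 1 n) hζ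
  refine hω ?_
  rw [show ω - 1 = (ω * ζ ^ n - 1) - ω * (ζ ^ n - 1) by ring]
  exact sub_mem h (mul_mem_left _ _ hζn)

theorem ne_bot_of_span_eq_prod {x : R} (hx : x ≠ 0) {s : Finset ι} {P : ι → Ideal R}
    (h : span {x} = ∏ i ∈ s, P i) {i : ι} (hi : i ∈ s) : P i ≠ ⊥ := fun hbot => hx <| by
  simpa [hbot] using (h ▸ prod_le_of_mem hi : span {x} ≤ P i) (mem_span_singleton_self x)

section IsDedekindDomain

variable [IsDedekindDomain R]

theorem not_prod_le_sq [DecidableEq ι] {s : Finset ι} {P : ι → Ideal R}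
    (hP : ∀ i ∈ s, (P i).IsMaximal) {j : ι} (hj : j ∈ s) (hPj : P j ≠ ⊥)
    (hne : ∀ i ∈ s, i ≠ j → P i ≠ P j) : ¬ ∏ i ∈ s, P i ≤ P j ^ 2 := by
  intro hle
  have := (hP j hj).isPrime
  rw [← Finset.mul_prod_erase _ _ hj, ← dvd_iff_le, sq] at hle
  obtain ⟨i, hi, hPi⟩ := exists_eq_of_prod_le (Q := P j)
    (fun i hi => hP i (Finset.mem_of_mem_erase hi)) (le_of_dvd ((mul_dvd_mul_iff_left hPj).1 hle))
  exact hne i (Finset.mem_of_mem_erase hi) (Finset.ne_of_mem_erase hi) hPi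

theorem sub_pow_mem_pow_of_mul_sub_one_mem {P : Ideal R} [hP : P.IsPrime] {e : ℕ} (he : e ≠ 0)
    {x ω a b : R} {μ : ℕ} (hxa : x * a - 1 ∈ P ^ e) (hx : x - ω ^ μ ∈ P ^ e)
    (hωb : ω * b - 1 ∈ P ^ e) : a - b ^ μ ∈ P ^ e := by
  have hω : ω ∉ P := fun hω => hP.ne_top <| (eq_top_iff_one _).2 <| by
    simpa using sub_mem (mul_mem_right b _ hω) (pow_le_self he hωb)
  have hωbμ : ω ^ μ * b ^ μ - 1 ∈ P ^ e := by
    rw [← mul_pow]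
    exact mem_of_dvd _ (by simpa using sub_dvd_pow_sub_pow (ω * b) 1 μ) hωb
  have hωμ_mul : ω ^ μ * (a - b ^ μ) ∈ P ^ e := by
    rw [show ω ^ μ * (a - b ^ μ) = (x * a - 1) - (x - ω ^ μ) * a - (ω ^ μ * b ^ μ - 1) by ring]
    exact sub_mem (sub_mem hxa (mul_mem_right _ _ hx)) hωbμ
  exact (hP.mul_mem_pow _ hωμ_mul).resolve_left fun h => hω (hP.mem_of_pow_mem _ h)

end IsDedekindDomain

end Ideal

theorem RingEquiv.pow_apply_eq_mul_pow {R : Type*} [CommSemiring R] {θ : R ≃+* R} {ζ ω : R}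
    (hθζ : θ ζ = ζ) (hθω : θ ω = ω * ζ) (n : ℕ) : (θ ^ n) ω = ω * ζ ^ n := by
  induction n with
  | zero => simp
  | succ n ih =>
    rw [pow_succ', RingAut.mul_apply, ih, map_mul, map_pow, hθω, hθζ, pow_succ', mul_assoc]

theorem RingEquiv.mul_pow_sub_one_mem_map_pow {R : Type*} [CommRing R] {θ : R ≃+* R} {ζ ω : R}
    (hθζ : θ ζ = ζ) (hθω : θ ω = ω * ζ) {I : Ideal R} {e : ℕ} (hω : ω - 1 ∈ I ^ e) (n : ℕ) :
    ω * ζ ^ n - 1 ∈ I.map ((θ ^ n : R ≃+* R) : R →+* R) ^ e := by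
  simpa only [RingEquiv.coe_toRingHom, map_sub, map_one, pow_apply_eq_mul_pow hθζ hθω] using
    Ideal.apply_mem_map_pow ((θ ^ n : R ≃+* R) : R →+* R) hω

namespace IsPrimitiveRoot

variable {R : Type*} [CommRing R] [IsDomain R] {ζ η : R} {p : ℕ}

theorem sub_one_dvd_sub_one [NeZero p] (hζ : IsPrimitiveRoot ζ p) (hη : IsPrimitiveRoot η p) :
    η - 1 ∣ ζ - 1 := by
  obtain ⟨i, -, rfl⟩ := hη.eq_pow_of_pow_eq_one hζ.pow_eq_one
  simpa using sub_dvd_pow_sub_pow η 1 i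

theorem sub_one_mem_map [NeZero p] (hζ : IsPrimitiveRoot ζ p) (σ : R ≃+* R) {I : Ideal R}
    (hI : ζ - 1 ∈ I) : ζ - 1 ∈ I.map (σ : R →+* R) := by
  have hσ : σ (ζ - 1) ∈ I.map (σ : R →+* R) := Ideal.mem_map_of_mem _ hI
  rw [map_sub, map_one] at hσ
  exact Ideal.mem_of_dvd _ (hζ.sub_one_dvd_sub_one (hζ.map_of_injective σ.injective)) hσ

theorem natCast_eq_of_pow_sub_pow_mem (hp : p.Prime) (hζ : IsPrimitiveRoot ζ p) {I : Ideal R}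
    (hI : ζ - 1 ∉ I) {a b : ℕ} (h : ζ ^ a - ζ ^ b ∈ I) : (a : ZMod p) = b := by
  have : NeZero p := ⟨hp.ne_zero⟩
  by_contra hab
  set c := ((a : ZMod p) - b).val
  have hc_cast : (c : ZMod p) = a - b := ZMod.natCast_zmod_val _
  have hc : ζ ^ a = ζ ^ b * ζ ^ c := by
    rw [← pow_add, (hζ.isOfFinOrder hp.ne_zero).pow_eq_pow_iff_modEq, ← hζ.eq_orderOf,
      ← ZMod.natCast_eq_natCast_iff]
    push_cast [hc_cast]
    ring
  have hη : IsPrimitiveRoot (ζ ^ c) p := by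
    refine hζ.pow_of_coprime c ((hp.coprime_iff_not_dvd.2 fun hpc => hab ?_).symm)
    rwa [← sub_eq_zero, ← hc_cast, ZMod.natCast_eq_zero_iff]
  have hηI : ζ ^ c - 1 ∈ I := by
    rwa [hc, ← mul_sub_one, Ideal.unit_mul_mem_iff_mem _ ((hζ.isUnit hp.ne_zero).pow b)] at h
  exact hI (Ideal.mem_of_dvd _ (hζ.sub_one_dvd_sub_one hη) hηI)

end IsPrimitiveRoot

theorem stmt13_general (p : ℕ) (hp : p.Prime)
    (S : Type*) [Field S] [NumberField S]
    (ζ ω : 𝓞 S) (hζ : IsPrimitiveRoot ζ p)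
    (θ σ : 𝓞 S ≃+* 𝓞 S)
    (hθζ : θ ζ = ζ) (hθω : θ ω = ω * ζ)
    (v μ : ℕ) (hμ : ¬ p ∣ μ)
    (hσζ : σ ζ = ζ ^ v)
    (π₀ : Ideal (𝓞 S)) (hπ₀ : π₀.IsPrime)
    (πn : ℕ → Ideal (𝓞 S))
    (hπn : ∀ n, πn n = Ideal.map ((θ ^ n : 𝓞 S ≃+* 𝓞 S) : 𝓞 S →+* 𝓞 S) π₀)
    (hsplit : (Ideal.span {ζ - 1} : Ideal (𝓞 S)) = ∏ n ∈ Finset.range p, πn n)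
    (hω0 : ω - 1 ∈ π₀ ^ 2)
    (hωn : ∀ n, 1 ≤ n → n ≤ p - 1 → ω - 1 ∈ πn n ∧ ω - 1 ∉ (πn n) ^ 2)
    (hσω : σ ω - ω ^ μ ∈ (Ideal.span {ζ - 1} : Ideal (𝓞 S)) ^ 2) :
    ∀ k, 1 ≤ k → k ≤ p - 1 → ∃ n, n < p ∧
      Ideal.map (σ : 𝓞 S →+* 𝓞 S) (πn k) = πn n ∧
      (n : ZMod p) = (k : ZMod p) * v * (μ : ZMod p)⁻¹ := by
  intro k hk1 hk2
  have : Fact p.Prime := ⟨hp⟩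
  have hπ_prime (n : ℕ) : (πn n).IsPrime := hπn n ▸ Ideal.map_isPrime_of_equiv _
  have hπ_ne_bot (n : ℕ) (hn : n ∈ Finset.range p) : πn n ≠ ⊥ :=
    Ideal.ne_bot_of_span_eq_prod (sub_ne_zero.2 (hζ.ne_one hp.one_lt)) hsplit hn
  have hπ_max (n : ℕ) (hn : n ∈ Finset.range p) : (πn n).IsMaximal :=
    (hπ_prime n).isMaximal (hπ_ne_bot n hn)
  have hπ_ge (n : ℕ) (hn : n ∈ Finset.range p) : Ideal.span {ζ - 1} ≤ πn n :=
    hsplit ▸ Ideal.prod_le_of_mem hn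
  have hω_sq (n : ℕ) : ω * ζ ^ n - 1 ∈ πn n ^ 2 :=
    hπn n ▸ RingEquiv.mul_pow_sub_one_mem_map_pow hθζ hθω hω0 n
  have hk : k ∈ Finset.range p := Finset.mem_range.2 (by omega)
  have : ((πn k).map (σ : 𝓞 S →+* 𝓞 S)).IsPrime := Ideal.map_isPrime_of_equiv _
  obtain ⟨N, hN, hσπ⟩ := Ideal.exists_eq_of_prod_le hπ_max <| by
    rw [← hsplit, Ideal.span_singleton_le_iff_mem]
    exact hζ.sub_one_mem_map σ (hπ_ge k hk (Ideal.mem_span_singleton_self _))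
  have hζ_notMem : ζ - 1 ∉ πn N ^ 2 := by
    rcases N.eq_zero_or_pos with rfl | hN0
    · refine fun h => Ideal.not_prod_le_sq hπ_max hN (hπ_ne_bot 0 hN) (fun m hm hm0 he => ?_)
        (hsplit ▸ (Ideal.span_singleton_le_iff_mem _).2 h)
      exact (hωn m (Nat.pos_of_ne_zero hm0) (by simp at hm; omega)).2 (by simpa [he] using hω_sq 0)
    · exact Ideal.sub_one_notMem_of_mul_pow_sub_one_mem (hω_sq N)
        (hωn N hN0 (by simp at hN; omega)).2
  have hσω_sq : σ ω * ζ ^ (k * v) - 1 ∈ πn N ^ 2 := by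
    simpa [hσπ, hσζ, ← pow_mul, mul_comm] using Ideal.apply_mem_map_pow (σ : 𝓞 S →+* 𝓞 S) (hω_sq k)
  have hcong := hζ.natCast_eq_of_pow_sub_pow_mem hp hζ_notMem (a := k * v) (b := N * μ) <| by
    rw [pow_mul ζ N μ]
    exact Ideal.sub_pow_mem_pow_of_mul_sub_one_mem two_ne_zero hσω_sq
      (Ideal.pow_right_mono (hπ_ge N hN) 2 hσω) (hω_sq N)
  have hμ0 : (μ : ZMod p) ≠ 0 := by rwa [Ne, ZMod.natCast_eq_zero_iff]
  refine ⟨N, Finset.mem_range.1 hN, hσπ.symm, ?_⟩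
  push_cast at hcong
  rw [hcong, mul_inv_cancel_right₀ hμ0]

theorem stmt13 (p : ℕ) (hp : p.Prime) (hodd : Odd p)
    (S : Type*) [Field S] [NumberField S]
    (ζ ω : 𝓞 S) (hζ : IsPrimitiveRoot ζ p)
    (θ σ : 𝓞 S ≃+* 𝓞 S)
    (hθζ : θ ζ = ζ) (hθω : θ ω = ω * ζ)
    (v μ : ℕ) (hv : orderOf (v : ZMod p) = p - 1) (hμ : ¬ p ∣ μ)
    (hvμ : (v : ZMod p) ≠ (μ : ZMod p))
    (hσζ : σ ζ = ζ ^ v)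
    (π₀ : Ideal (𝓞 S)) (hπ₀ : π₀.IsPrime) (hπ₀p : ζ - 1 ∈ π₀)
    (πn : ℕ → Ideal (𝓞 S))
    (hπn : ∀ n, πn n = Ideal.map ((θ ^ n : 𝓞 S ≃+* 𝓞 S) : 𝓞 S →+* 𝓞 S) π₀)
    (hsplit : (Ideal.span {ζ - 1} : Ideal (𝓞 S)) = ∏ n ∈ Finset.range p, πn n)
    (hω0 : ω - 1 ∈ π₀ ^ 2)
    (hωn : ∀ n, 1 ≤ n → n ≤ p - 1 → ω - 1 ∈ πn n ∧ ω - 1 ∉ (πn n) ^ 2)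
    (hσω : σ ω - ω ^ μ ∈ (Ideal.span {ζ - 1} : Ideal (𝓞 S)) ^ 2) :
    ∀ k, 1 ≤ k → k ≤ p - 1 → ∃ n, n < p ∧
      Ideal.map (σ : 𝓞 S →+* 𝓞 S) (πn k) = πn n ∧
      (n : ZMod p) = (k : ZMod p) * v * (μ : ZMod p)⁻¹ :=
  stmt13_general p hp S ζ ω hζ θ σ hθζ hθω v μ hμ hσζ π₀ hπ₀ πn hπn hsplit hω0 hωn hσω
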